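/- arXiv:2207.12277 — 6 statements merged into one kernel-verified Lean document; each statement's English description precedes it below -/
import Mathlib

section
/- Every stationary solution is nonnegative, and every nonzero stationary solution is everywhere positive: if w : Ω → ℝ satisfies w(x) = ∫_Ω k(x,y) F(w(y)) dy for all x ∈ Ω, then w ≥ 0 on Ω; moreover if w ≢ 0, then w(x) > 0 for all x ∈ Ω. -/
set_option maxHeartbeats 800000


open MeasureTheory Set Filter Topology

noncomputable section

/-- The domain `Ω = (-a, a)`. -/
def Dom (a : ℝ) : Set ℝ := Set.Ioo (-a) a

/-- Every stationary solution `w = T(w)` is nonnegative on `Ω`, and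
every nonzero stationary solution is everywhere positive on `Ω`. -/
theorem stationary_solution_nonneg_and_positive
    (a δ Λ M : ℝ) (ha : 0 < a) (hδ : 0 < δ) (hΛ : 0 < Λ) (hM : 0 < M)
    (k : ℝ → ℝ → ℝ) (hk_meas : Measurable fun p : ℝ × ℝ => k p.1 p.2)
    (hk_lb : ∀ x ∈ Dom a, ∀ y ∈ Dom a, δ < k x y)
    (hk_ub : ∀ x ∈ Dom a, ∀ y ∈ Dom a, k x y ≤ Λ)
    (F : ℝ → ℝ) (hF_cont : Continuous F)
    (hF_nonneg : ∀ t : ℝ, 0 ≤ F t) (hF_le : ∀ t : ℝ, F t ≤ M)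
    (hF_mono : StrictMonoOn F (Set.Ici 0))
    (hF_vanish : ∀ t : ℝ, t ≤ 0 → F t = 0)
    (w : ℝ → ℝ) (hw_meas : Measurable w)
    (hw_stat : ∀ x ∈ Dom a, w x = ∫ y in Dom a, k x y * F (w y)) :
    (∀ x ∈ Dom a, 0 ≤ w x) ∧
      ((∃ x ∈ Dom a, w x ≠ 0) → ∀ x ∈ Dom a, 0 < w x) := by
  have hDmeas : MeasurableSet (Dom a) := measurableSet_Ioo
  have hDfin : volume (Dom a) < ⊤ := measure_Ioo_lt_top
  set g : ℝ → ℝ := fun y => F (w y) with hg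
  have hg_meas : Measurable g := hF_cont.measurable.comp hw_meas
  have hg_nonneg : ∀ y, 0 ≤ g y := fun y => hF_nonneg _
  have hconst : ∀ C : ℝ, IntegrableOn (fun _ : ℝ => C) (Dom a) volume := fun C =>
    integrableOn_const hDfin.ne
  have hg_int : IntegrableOn g (Dom a) := by
    refine (hconst M).mono' (hg_meas.aestronglyMeasurable) ?_
    filter_upwards with y
    rw [Real.norm_eq_abs, abs_of_nonneg (hg_nonneg y)]
    exact hF_le _
  have hkg_int : ∀ x ∈ Dom a, IntegrableOn (fun y => k x y * g y) (Dom a) := by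
    intro x hx
    have hkx : Measurable fun y => k x y :=
      hk_meas.comp (measurable_const.prodMk measurable_id)
    refine (hconst (Λ * M)).mono' ((hkx.mul hg_meas).aestronglyMeasurable) ?_
    filter_upwards [ae_restrict_mem hDmeas] with y hy
    rw [Real.norm_eq_abs, abs_of_nonneg
      (mul_nonneg (le_of_lt (hδ.trans (hk_lb x hx y hy))) (hg_nonneg y))]
    exact mul_le_mul (hk_ub x hx y hy) (hF_le _) (hg_nonneg y) (le_of_lt hΛ)
  have hnonneg : ∀ x ∈ Dom a, 0 ≤ w x := by
    intro x hx
    rw [hw_stat x hx]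
    refine setIntegral_nonneg hDmeas fun y hy => ?_
    exact mul_nonneg (le_of_lt (hδ.trans (hk_lb x hx y hy))) (hg_nonneg y)
  refine ⟨hnonneg, ?_⟩
  rintro ⟨x0, hx0, hwx0⟩ x hx
  have hI0 : 0 ≤ ∫ y in Dom a, g y :=
    setIntegral_nonneg hDmeas fun y _ => hg_nonneg y
  rcases hI0.lt_or_eq with hIpos | hIzero
  · -- I > 0 : w x ≥ δ * I > 0
    have hle : δ * ∫ y in Dom a, g y ≤ w x := by
      rw [hw_stat x hx, ← integral_const_mul]
      refine setIntegral_mono_on ((hg_int.const_mul δ)) (hkg_int x hx) hDmeas ?_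
      intro y hy
      exact mul_le_mul_of_nonneg_right (le_of_lt (hk_lb x hx y hy)) (hg_nonneg y)
    exact lt_of_lt_of_le (mul_pos hδ hIpos) hle
  · -- I = 0 : g vanishes a.e., so w ≡ 0 on Dom a, contradiction
    exfalso
    have hgz : g =ᵐ[volume.restrict (Dom a)] 0 := by
      have := (integral_eq_zero_iff_of_nonneg (fun y => hg_nonneg y) hg_int).1 hIzero.symm
      exact this
    apply hwx0
    rw [hw_stat x0 hx0]
    have : (fun y => k x0 y * g y) =ᵐ[volume.restrict (Dom a)] 0 := by
      filter_upwards [hgz] with y hy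
      simp [hy]
    rw [integral_congr_ae this]; simp
end
end

section
/- Comparison of super- and subsolutions: let u, v ∈ X (i.e., u, v ∈ L²(Ω) are continuous on Ω except at finitely many points) with u(x) ≥ T(u)(x) and v(x) ≤ T(v)(x) for all x ∈ Ω. If u(x) > 0 for all x ∈ Ω, then u(x) ≥ v(x) for all x ∈ Ω. -/
open MeasureTheory Set Filter Topology

noncomputable section

/-- Lebesgue measure restricted to `Ω = (-a, a)`. -/
def μDom (a : ℝ) : Measure ℝ := volume.restrict (Dom a)

/-- Membership in `X`: square integrable on `Ω` and continuous on `Ω` except at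
finitely many points. -/
def MemX (a : ℝ) (u : ℝ → ℝ) : Prop :=
  MemLp u 2 (μDom a) ∧ ∃ S : Finset ℝ, ContinuousOn u (Dom a \ ↑S)

/-- Comparison of super- and subsolutions: if `u, v ∈ X`,
`u ≥ T(u)` and `v ≤ T(v)` on `Ω`, and `u > 0` on `Ω`, then `u ≥ v` on `Ω`. -/
theorem supersolution_ge_subsolution
    (a δ Λ M : ℝ) (ha : 0 < a) (hδ : 0 < δ) (hΛ : 0 < Λ) (hM : 0 < M)
    (k : ℝ → ℝ → ℝ) (hk_meas : Measurable fun p : ℝ × ℝ => k p.1 p.2)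
    (hk_lb : ∀ x ∈ Dom a, ∀ y ∈ Dom a, δ < k x y)
    (hk_ub : ∀ x ∈ Dom a, ∀ y ∈ Dom a, k x y ≤ Λ)
    (F : ℝ → ℝ) (hF_cont : Continuous F)
    (hF_nonneg : ∀ t : ℝ, 0 ≤ F t) (hF_le : ∀ t : ℝ, F t ≤ M)
    (hF_mono : StrictMonoOn F (Set.Ici 0))
    (hF_vanish : ∀ t : ℝ, t ≤ 0 → F t = 0)
    (hF_ratio : ∀ s t : ℝ, 0 < t → t < s → F s / s < F t / t)
    (u v : ℝ → ℝ) (hu_X : MemX a u) (hv_X : MemX a v)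
    (hu_super : ∀ x ∈ Dom a, (∫ y in Dom a, k x y * F (u y)) ≤ u x)
    (hv_sub : ∀ x ∈ Dom a, v x ≤ ∫ y in Dom a, k x y * F (v y))
    (hu_pos : ∀ x ∈ Dom a, 0 < u x) :
    ∀ x ∈ Dom a, v x ≤ u x := by
  classical
  have hDom_meas : MeasurableSet (Dom a) := measurableSet_Ioo
  haveI : IsFiniteMeasure (volume.restrict (Dom a)) :=
    ⟨by rw [Measure.restrict_apply_univ, show Dom a = Set.Ioo (-a) a from rfl,
        Real.volume_Ioo]; exact ENNReal.ofReal_lt_top⟩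
  have hvol : volume (Dom a) = ENNReal.ofReal (2 * a) := by
    rw [show Dom a = Set.Ioo (-a) a from rfl, Real.volume_Ioo]; ring_nf
  have hμpos : 0 < volume (Dom a) := by
    rw [hvol]; exact ENNReal.ofReal_pos.mpr (by linarith)
  have hμtoReal : (volume (Dom a)).toReal = 2 * a := by
    rw [hvol, ENNReal.toReal_ofReal (by linarith)]
  -- measurability
  have hu_m : AEStronglyMeasurable u (volume.restrict (Dom a)) := hu_X.1.aestronglyMeasurable
  have hv_m : AEStronglyMeasurable v (volume.restrict (Dom a)) := hv_X.1.aestronglyMeasurable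
  have hFu_m : AEStronglyMeasurable (fun y => F (u y)) (volume.restrict (Dom a)) :=
    hF_cont.comp_aestronglyMeasurable hu_m
  have hFv_m : AEStronglyMeasurable (fun y => F (v y)) (volume.restrict (Dom a)) :=
    hF_cont.comp_aestronglyMeasurable hv_m
  have hkx : ∀ x : ℝ, Measurable (fun y => k x y) := fun x =>
    hk_meas.comp measurable_prodMk_left
  -- generic integrability from boundedness on the set
  have key_int : ∀ (w : ℝ → ℝ) (C : ℝ),
      AEStronglyMeasurable w (volume.restrict (Dom a)) →
      (∀ y ∈ Dom a, ‖w y‖ ≤ C) → IntegrableOn w (Dom a) := by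
    intro w C hm hb
    refine Integrable.mono' (integrable_const C) hm ?_
    exact (ae_restrict_iff' hDom_meas).mpr (ae_of_all _ hb)
  -- facts about F
  have hF0 : F 0 = 0 := hF_vanish 0 le_rfl
  have hFpos : ∀ t : ℝ, 0 < t → 0 < F t := by
    intro t ht
    have := hF_mono (le_refl (0:ℝ)) (le_of_lt ht) ht
    rwa [hF0] at this
  have hFle' : ∀ s t : ℝ, t ≤ s → 0 ≤ s → F t ≤ F s := by
    intro s t hts hs
    rcases le_or_gt t 0 with h | h
    · rw [hF_vanish t h]; exact hF_nonneg s
    · exact hF_mono.monotoneOn h.le hs hts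
  -- positivity of integrals
  have pos_int : ∀ (w : ℝ → ℝ), IntegrableOn w (Dom a) → (∀ y ∈ Dom a, 0 < w y) →
      0 < ∫ y in Dom a, w y := by
    intro w hw hpos
    rw [integral_pos_iff_support_of_nonneg_ae
      ((ae_restrict_iff' hDom_meas).mpr (ae_of_all _ fun y hy => (hpos y hy).le)) hw]
    calc 0 < volume (Dom a) := hμpos
      _ = (volume.restrict (Dom a)) (Dom a) := (Measure.restrict_apply_self _ _).symm
      _ ≤ (volume.restrict (Dom a)) (Function.support w) :=
          measure_mono fun y hy => (hpos y hy).ne'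
  -- integrability of F ∘ u  and its integral I > 0
  have hFu_int : IntegrableOn (fun y => F (u y)) (Dom a) :=
    key_int _ M hFu_m fun y _ => by
      rw [Real.norm_eq_abs, abs_of_nonneg (hF_nonneg _)]; exact hF_le _
  set I : ℝ := ∫ y in Dom a, F (u y) with hI_def
  have hI : 0 < I :=
    pos_int _ hFu_int fun y hy => hFpos _ (hu_pos y hy)
  -- integrability of k x y * F(w y) for bounded F∘w
  have kern_int : ∀ (x : ℝ), x ∈ Dom a → ∀ (w : ℝ → ℝ),
      AEStronglyMeasurable w (volume.restrict (Dom a)) →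
      (∀ y ∈ Dom a, 0 ≤ w y) → (∀ y ∈ Dom a, w y ≤ M) →
      IntegrableOn (fun y => k x y * w y) (Dom a) := by
    intro x hx w hm h0 h1
    refine key_int _ (Λ * M) (((hkx x).aestronglyMeasurable).mul hm) ?_
    intro y hy
    have hk0 : 0 < k x y := lt_trans hδ (hk_lb x hx y hy)
    rw [Real.norm_eq_abs, abs_of_nonneg (mul_nonneg hk0.le (h0 y hy))]
    exact mul_le_mul (hk_ub x hx y hy) (h1 y hy) (h0 y hy) hΛ.le
  -- lower bound on u : u x ≥ δ * I
  have hu_lb : ∀ x ∈ Dom a, δ * I ≤ u x := by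
    intro x hx
    have h1 : IntegrableOn (fun y => δ * F (u y)) (Dom a) := (hFu_int.const_mul δ)
    have h2 : IntegrableOn (fun y => k x y * F (u y)) (Dom a) :=
      kern_int x hx _ hFu_m (fun y _ => hF_nonneg _) (fun y _ => hF_le _)
    have := setIntegral_mono_on h1 h2 hDom_meas (fun y hy =>
      mul_le_mul_of_nonneg_right (hk_lb x hx y hy).le (hF_nonneg _))
    rw [integral_const_mul] at this
    exact this.trans (hu_super x hx)
  -- upper bound on v : v x ≤ B
  set B : ℝ := Λ * M * (2 * a) with hB_def
  have hB0 : 0 ≤ B := by positivity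
  have hv_ub : ∀ x ∈ Dom a, v x ≤ B := by
    intro x hx
    have h2 : IntegrableOn (fun y => k x y * F (v y)) (Dom a) :=
      kern_int x hx _ hFv_m (fun y _ => hF_nonneg _) (fun y _ => hF_le _)
    have h3 : ∫ y in Dom a, k x y * F (v y) ≤ ∫ _y in Dom a, Λ * M := by
      refine setIntegral_mono_on h2 (integrable_const _) hDom_meas (fun y hy => ?_)
      have hk0 : 0 < k x y := lt_trans hδ (hk_lb x hx y hy)
      exact mul_le_mul (hk_ub x hx y hy) (hF_le _) (hF_nonneg _) hΛ.le
    have h4 : ∫ _y in Dom a, Λ * M = B := by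
      rw [setIntegral_const, smul_eq_mul, Measure.real, hμtoReal]; ring
    exact (hv_sub x hx).trans (h3.trans_eq h4)
  -- the supremum of v/u on Dom a
  set S : Set ℝ := (fun x => v x / u x) '' (Dom a) with hS_def
  have hSne : S.Nonempty := ⟨v 0 / u 0, 0, by constructor <;> [skip; rfl]; exact ⟨by linarith, ha⟩⟩
  have hSbdd : BddAbove S := by
    refine ⟨B / (δ * I), ?_⟩
    rintro r ⟨x, hx, rfl⟩
    have hux : 0 < u x := hu_pos x hx
    exact div_le_div₀ hB0 (hv_ub x hx) (by positivity) (hu_lb x hx)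
  set c : ℝ := sSup S with hc_def
  rcases le_or_gt c 1 with hc1 | hc1
  · -- easy case
    intro x hx
    have : v x / u x ≤ c := le_csSup hSbdd ⟨x, hx, rfl⟩
    have hux := hu_pos x hx
    have := this.trans hc1
    rw [div_le_one hux] at this
    exact this
  · -- c > 1 : derive contradiction
    exfalso
    have hc0 : 0 < c := lt_trans one_pos hc1
    have hle : ∀ y ∈ Dom a, v y ≤ c * u y := by
      intro y hy
      have : v y / u y ≤ c := le_csSup hSbdd ⟨y, hy, rfl⟩
      rwa [div_le_iff₀ (hu_pos y hy)] at this
    -- gap function g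
    set g : ℝ → ℝ := fun y => c * F (u y) - F (c * u y) with hg_def
    have hFcu_m : AEStronglyMeasurable (fun y => F (c * u y)) (volume.restrict (Dom a)) :=
      hF_cont.comp_aestronglyMeasurable (hu_m.const_mul c)
    have hg_m : AEStronglyMeasurable g (volume.restrict (Dom a)) :=
      (hFu_m.const_mul c).sub hFcu_m
    have hg_pos : ∀ y ∈ Dom a, 0 < g y := by
      intro y hy
      have huy := hu_pos y hy
      have hlt : u y < c * u y := by nlinarith
      have := hF_ratio (c * u y) (u y) huy hlt
      have hcu : 0 < c * u y := by positivity
      rw [div_lt_div_iff₀ hcu huy] at this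
      simp only [hg_def]
      nlinarith
    have hg_le : ∀ y ∈ Dom a, g y ≤ c * M := by
      intro y hy
      have := hF_nonneg (c * u y)
      have := hF_le (u y)
      simp only [hg_def]; nlinarith
    have hg_int : IntegrableOn g (Dom a) :=
      key_int _ (c * M) hg_m fun y hy => by
        rw [Real.norm_eq_abs, abs_of_nonneg (hg_pos y hy).le]; exact hg_le y hy
    set η : ℝ := ∫ y in Dom a, g y with hη_def
    have hη : 0 < η := pos_int _ hg_int hg_pos
    -- key estimate: v x ≤ c * u x - δ * η
    have key : ∀ x ∈ Dom a, v x ≤ c * u x - δ * η := by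
      intro x hx
      have hFv_int : IntegrableOn (fun y => k x y * F (v y)) (Dom a) :=
        kern_int x hx _ hFv_m (fun y _ => hF_nonneg _) (fun y _ => hF_le _)
      have hFcu_int : IntegrableOn (fun y => k x y * F (c * u y)) (Dom a) :=
        kern_int x hx _ hFcu_m (fun y _ => hF_nonneg _) (fun y _ => hF_le _)
      have hFu_intk : IntegrableOn (fun y => k x y * F (u y)) (Dom a) :=
        kern_int x hx _ hFu_m (fun y _ => hF_nonneg _) (fun y _ => hF_le _)
      have hkg_int : IntegrableOn (fun y => k x y * g y) (Dom a) :=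
        key_int _ (Λ * (c * M)) (((hkx x).aestronglyMeasurable).mul hg_m) fun y hy => by
          have hk0 : 0 < k x y := lt_trans hδ (hk_lb x hx y hy)
          rw [Real.norm_eq_abs, abs_of_nonneg (mul_nonneg hk0.le (hg_pos y hy).le)]
          exact mul_le_mul (hk_ub x hx y hy) (hg_le y hy) (hg_pos y hy).le hΛ.le
      -- step 1 : v x ≤ ∫ k F(c u)
      have step1 : v x ≤ ∫ y in Dom a, k x y * F (c * u y) := by
        refine (hv_sub x hx).trans
          (setIntegral_mono_on hFv_int hFcu_int hDom_meas fun y hy => ?_)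
        have hk0 : 0 < k x y := lt_trans hδ (hk_lb x hx y hy)
        refine mul_le_mul_of_nonneg_left ?_ hk0.le
        exact hFle' _ _ (hle y hy) (mul_nonneg hc0.le (hu_pos y hy).le)
      -- step 2 : ∫ k F(c u) = c * ∫ k F(u) - ∫ k g
      have step2 : ∫ y in Dom a, k x y * F (c * u y)
          = c * (∫ y in Dom a, k x y * F (u y)) - ∫ y in Dom a, k x y * g y := by
        have heq : ∀ y, k x y * F (c * u y) = c * (k x y * F (u y)) - k x y * g y := by
          intro y; simp only [hg_def]; ring
        simp_rw [heq]
        rw [integral_sub ((hFu_intk.const_mul c)) hkg_int, integral_const_mul]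
      -- step 3 : δ * η ≤ ∫ k g
      have step3 : δ * η ≤ ∫ y in Dom a, k x y * g y := by
        have := setIntegral_mono_on (hg_int.const_mul δ) hkg_int hDom_meas fun y hy =>
          mul_le_mul_of_nonneg_right (hk_lb x hx y hy).le (hg_pos y hy).le
        rwa [integral_const_mul] at this
      have step4 : c * (∫ y in Dom a, k x y * F (u y)) ≤ c * u x :=
        mul_le_mul_of_nonneg_left (hu_super x hx) hc0.le
      calc v x ≤ ∫ y in Dom a, k x y * F (c * u y) := step1
        _ = c * (∫ y in Dom a, k x y * F (u y)) - ∫ y in Dom a, k x y * g y := step2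
        _ ≤ c * u x - δ * η := by linarith
    -- contradiction via approximate maximizer
    set ε : ℝ := min (c - 1) (δ * η / (B + 1)) with hε_def
    have hε0 : 0 < ε := lt_min (by linarith) (by positivity)
    obtain ⟨r, ⟨x, hx, rfl⟩, hr⟩ : ∃ r ∈ S, c - ε < r :=
      exists_lt_of_lt_csSup hSne (by linarith)
    have hux : 0 < u x := hu_pos x hx
    -- from key : v x / u x ≤ c - δη / u x
    have h1 : v x ≤ c * u x - δ * η := key x hx
    have hr' : c - ε < v x / u x := hr
    have h2 : (c - ε) * u x < v x := (lt_div_iff₀ hux).mp hr'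
    -- hence δη < ε * u x, so u x > δη/ε ≥ B + 1
    have h3 : δ * η < ε * u x := by nlinarith
    have hεle : ε ≤ δ * η / (B + 1) := min_le_right _ _
    have h4 : B + 1 < u x := by
      have hεB : ε * (B + 1) ≤ δ * η :=
        (le_div_iff₀ (by linarith : (0:ℝ) < B + 1)).mp hεle
      nlinarith
    have h5 : u x ≤ (c - ε) * u x := by
      have : 1 ≤ c - ε := by
        have := min_le_left (c - 1) (δ * η / (B + 1)); simp only [hε_def] at *; linarith
      nlinarith
    have h6 : v x ≤ B := hv_ub x hx
    linarith
end
end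

section
/- Uniqueness of the nonzero stationary state: there exists at most one nonzero stationary solution of w = T(w) in X; that is, if u, v ∈ X are both nonzero and satisfy u(x) = T(u)(x) and v(x) = T(v)(x) for all x ∈ Ω, then u ≡ v on Ω. -/
open MeasureTheory Set Filter Topology

noncomputable section

lemma dom_meas (a : ℝ) : MeasurableSet (Dom a) := measurableSet_Ioo

instance finDom (a : ℝ) : IsFiniteMeasure (volume.restrict (Dom a)) := by
  constructor
  rw [Measure.restrict_apply_univ]
  exact measure_Ioo_lt_top

lemma bdd_integrable (a : ℝ) (g : ℝ → ℝ) (C : ℝ)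
    (hm : AEStronglyMeasurable g (volume.restrict (Dom a)))
    (hb : ∀ y ∈ Dom a, ‖g y‖ ≤ C) :
    Integrable g (volume.restrict (Dom a)) :=
  ⟨hm, HasFiniteIntegral.of_bounded ((ae_restrict_mem (dom_meas a)).mono hb)⟩

lemma k_slice_meas {k : ℝ → ℝ → ℝ} (hk : Measurable fun p : ℝ × ℝ => k p.1 p.2) (x : ℝ) :
    Measurable fun y => k x y :=
  hk.comp (measurable_const.prodMk measurable_id)

lemma sol_facts (a δ Λ M : ℝ) (ha : 0 < a) (hδ : 0 < δ) (hΛ : 0 < Λ) (hM : 0 < M)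
    (k : ℝ → ℝ → ℝ) (hk_meas : Measurable fun p : ℝ × ℝ => k p.1 p.2)
    (hk_lb : ∀ x ∈ Dom a, ∀ y ∈ Dom a, δ < k x y)
    (hk_ub : ∀ x ∈ Dom a, ∀ y ∈ Dom a, k x y ≤ Λ)
    (F : ℝ → ℝ) (hF_cont : Continuous F)
    (hF_nonneg : ∀ t : ℝ, 0 ≤ F t) (hF_le : ∀ t : ℝ, F t ≤ M)
    (w : ℝ → ℝ) (hw_m : AEStronglyMeasurable w (volume.restrict (Dom a)))
    (hw_ne : ∃ x ∈ Dom a, w x ≠ 0)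
    (hw_stat : ∀ x ∈ Dom a, w x = ∫ y in Dom a, k x y * F (w y)) :
    (∃ l > 0, ∀ x ∈ Dom a, l ≤ w x) ∧ (∀ x ∈ Dom a, w x ≤ Λ * M * (2 * a)) := by
  have hFw_m : AEStronglyMeasurable (fun y => F (w y)) (volume.restrict (Dom a)) :=
    hF_cont.comp_aestronglyMeasurable hw_m
  have hFw_int : Integrable (fun y => F (w y)) (volume.restrict (Dom a)) :=
    bdd_integrable a _ M hFw_m (fun y _ => by
      rw [Real.norm_eq_abs, abs_of_nonneg (hF_nonneg _)]; exact hF_le _)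
  have hkF_int : ∀ x ∈ Dom a, Integrable (fun y => k x y * F (w y)) (volume.restrict (Dom a)) := by
    intro x hx
    refine bdd_integrable a _ (Λ * M) (((k_slice_meas hk_meas x).aestronglyMeasurable).mul hFw_m) ?_
    intro y hy
    rw [Real.norm_eq_abs, abs_of_nonneg (mul_nonneg (le_of_lt (lt_trans hδ (hk_lb x hx y hy))) (hF_nonneg _))]
    exact mul_le_mul (hk_ub x hx y hy) (hF_le _) (hF_nonneg _) hΛ.le
  set I : ℝ := ∫ y in Dom a, F (w y) with hI_def
  have hI_nonneg : 0 ≤ I := integral_nonneg fun y => hF_nonneg _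
  have hI_pos : 0 < I := by
    rcases hI_nonneg.lt_or_eq with h | h
    · exact h
    · exfalso
      obtain ⟨x, hx, hxne⟩ := hw_ne
      have hzero : (fun y => F (w y)) =ᵐ[volume.restrict (Dom a)] 0 :=
        (integral_eq_zero_iff_of_nonneg (fun y => hF_nonneg _) hFw_int).1 h.symm
      have : w x = 0 := by
        rw [hw_stat x hx]
        have he : (fun y => k x y * F (w y)) =ᵐ[volume.restrict (Dom a)] (fun _ => 0) :=
          hzero.mono fun y hy => by
            simp only [Pi.zero_apply] at hy
            simp [hy]
        rw [integral_congr_ae he, integral_zero]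
      exact hxne this
  constructor
  · refine ⟨δ * I, mul_pos hδ hI_pos, fun x hx => ?_⟩
    rw [hw_stat x hx]
    have : ∫ y in Dom a, δ * F (w y) ≤ ∫ y in Dom a, k x y * F (w y) := by
      refine integral_mono_ae (hFw_int.const_mul δ) (hkF_int x hx)
        ((ae_restrict_mem (dom_meas a)).mono fun y hy => ?_)
      exact mul_le_mul_of_nonneg_right (hk_lb x hx y hy).le (hF_nonneg _)
    calc δ * I = ∫ y in Dom a, δ * F (w y) := (integral_const_mul δ _).symm
      _ ≤ _ := this
  · intro x hx
    rw [hw_stat x hx]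
    have hconst : ∫ (_ : ℝ) in Dom a, Λ * M = Λ * M * (2 * a) := by
      rw [setIntegral_const]
      rw [Dom, measureReal_def, Real.volume_Ioo]
      rw [ENNReal.toReal_ofReal (by linarith), smul_eq_mul]
      ring
    calc (∫ y in Dom a, k x y * F (w y)) ≤ ∫ (_ : ℝ) in Dom a, Λ * M := by
          refine integral_mono_ae (hkF_int x hx) (integrable_const _)
            ((ae_restrict_mem (dom_meas a)).mono fun y hy => ?_)
          exact mul_le_mul (hk_ub x hx y hy) (hF_le _) (hF_nonneg _) hΛ.le
      _ = Λ * M * (2 * a) := hconst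

lemma aux_le (a δ Λ M : ℝ) (ha : 0 < a) (hδ : 0 < δ) (hΛ : 0 < Λ) (hM : 0 < M)
    (k : ℝ → ℝ → ℝ) (hk_meas : Measurable fun p : ℝ × ℝ => k p.1 p.2)
    (hk_lb : ∀ x ∈ Dom a, ∀ y ∈ Dom a, δ < k x y)
    (hk_ub : ∀ x ∈ Dom a, ∀ y ∈ Dom a, k x y ≤ Λ)
    (F : ℝ → ℝ) (hF_cont : Continuous F)
    (hF_nonneg : ∀ t : ℝ, 0 ≤ F t) (hF_le : ∀ t : ℝ, F t ≤ M)
    (hF_mono : StrictMonoOn F (Set.Ici 0))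
    (hF_ratio : ∀ s t : ℝ, 0 < t → t < s → F s / s < F t / t)
    (u v : ℝ → ℝ)
    (hu_m : AEStronglyMeasurable u (volume.restrict (Dom a)))
    (hv_m : AEStronglyMeasurable v (volume.restrict (Dom a)))
    (hu_ne : ∃ x ∈ Dom a, u x ≠ 0) (hv_ne : ∃ x ∈ Dom a, v x ≠ 0)
    (hu_stat : ∀ x ∈ Dom a, u x = ∫ y in Dom a, k x y * F (u y))
    (hv_stat : ∀ x ∈ Dom a, v x = ∫ y in Dom a, k x y * F (v y)) :
    ∀ x ∈ Dom a, v x ≤ u x := by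
  obtain ⟨⟨lu, hlu_pos, hlu⟩, hu_hi⟩ :=
    sol_facts a δ Λ M ha hδ hΛ hM k hk_meas hk_lb hk_ub F hF_cont hF_nonneg hF_le u hu_m hu_ne hu_stat
  obtain ⟨⟨lv, hlv_pos, hlv⟩, hv_hi⟩ :=
    sol_facts a δ Λ M ha hδ hΛ hM k hk_meas hk_lb hk_ub F hF_cont hF_nonneg hF_le v hv_m hv_ne hv_stat
  set B : ℝ := Λ * M * (2 * a) with hB_def
  have hB : 0 < B := by positivity
  have hu_pos : ∀ x ∈ Dom a, 0 < u x := fun x hx => lt_of_lt_of_le hlu_pos (hlu x hx)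
  have hv_pos : ∀ x ∈ Dom a, 0 < v x := fun x hx => lt_of_lt_of_le hlv_pos (hlv x hx)
  have hx0 : (0:ℝ) ∈ Dom a := by constructor <;> simp [ha, neg_lt_zero] <;> linarith
  set s : Set ℝ := {t : ℝ | 0 ≤ t ∧ ∀ x ∈ Dom a, t * v x ≤ u x} with hs_def
  have h0s : (0:ℝ) ∈ s := ⟨le_refl 0, fun x hx => by rw [zero_mul]; exact (hu_pos x hx).le⟩
  have hbdd : BddAbove s := by
    refine ⟨u 0 / v 0, fun t ht => ?_⟩
    exact (le_div_iff₀ (hv_pos 0 hx0)).2 (ht.2 0 hx0)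
  set c : ℝ := sSup s with hc_def
  have hcs : ∀ x ∈ Dom a, c * v x ≤ u x := by
    intro x hx
    refine (le_div_iff₀ (hv_pos x hx)).1 (csSup_le ⟨0, h0s⟩ fun t ht => ?_)
    exact (le_div_iff₀ (hv_pos x hx)).2 (ht.2 x hx)
  have hc0 : 0 ≤ c := le_csSup hbdd h0s
  have hc_pos : 0 < c := by
    have hmem : lu / B ∈ s := by
      refine ⟨by positivity, fun x hx => ?_⟩
      calc lu / B * v x ≤ lu / B * B :=
            mul_le_mul_of_nonneg_left (hv_hi x hx) (by positivity)
        _ = lu := div_mul_cancel₀ lu hB.ne'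
        _ ≤ u x := hlu x hx
    exact lt_of_lt_of_le (by positivity) (le_csSup hbdd hmem)
  have hc1 : 1 ≤ c := by
    by_contra hlt
    push_neg at hlt
    set g : ℝ → ℝ := fun y => F (c * v y) - c * F (v y) with hg_def
    have hg_pos : ∀ y ∈ Dom a, 0 < g y := by
      intro y hy
      have hvy := hv_pos y hy
      have hcv : 0 < c * v y := mul_pos hc_pos hvy
      have h1 := hF_ratio (v y) (c * v y) hcv (by nlinarith)
      have h2 := (div_lt_div_iff₀ hvy hcv).1 h1
      have h3 : (c * F (v y)) * v y < F (c * v y) * v y := by nlinarith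
      have := lt_of_mul_lt_mul_right h3 hvy.le
      simpa [hg_def] using this
    have hg_m : AEStronglyMeasurable g (volume.restrict (Dom a)) := by
      apply AEStronglyMeasurable.sub
      · exact hF_cont.comp_aestronglyMeasurable (hv_m.const_mul c)
      · exact (hF_cont.comp_aestronglyMeasurable hv_m).const_mul c
    have hgb : ∀ y : ℝ, |F (c * v y) - c * F (v y)| ≤ 2 * M := by
      intro y
      rw [abs_le]
      have h1 := hF_le (v y); have h2 := hF_nonneg (c * v y)
      have h3 := hF_nonneg (v y); have h4 := hF_le (c * v y)
      constructor <;> nlinarith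
    have hg_int : Integrable g (volume.restrict (Dom a)) := by
      refine bdd_integrable a g (2 * M) hg_m fun y _ => ?_
      rw [hg_def, Real.norm_eq_abs]
      exact hgb y
    set J : ℝ := ∫ y in Dom a, g y with hJ_def
    have hJ_pos : 0 < J := by
      rw [hJ_def]
      rw [setIntegral_pos_iff_support_of_nonneg_ae
        (((ae_restrict_mem (dom_meas a)).mono fun y hy => (hg_pos y hy).le)) hg_int]
      have hsub : Dom a ⊆ Function.support g ∩ Dom a :=
        fun y hy => ⟨fun h0 => (hg_pos y hy).ne' h0, hy⟩
      calc (0:ENNReal) < ENNReal.ofReal (a - -a) := by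
            rw [ENNReal.ofReal_pos]; linarith
        _ = volume (Dom a) := (Real.volume_Ioo).symm
        _ ≤ volume (Function.support g ∩ Dom a) := measure_mono hsub
    set ε : ℝ := δ * J / B with hε_def
    have hε_pos : 0 < ε := by positivity
    have hmem : c + ε ∈ s := by
      refine ⟨by positivity, fun x hx => ?_⟩
      have hFv_m : AEStronglyMeasurable (fun y => F (v y)) (volume.restrict (Dom a)) :=
        hF_cont.comp_aestronglyMeasurable hv_m
      have hFcv_m : AEStronglyMeasurable (fun y => F (c * v y)) (volume.restrict (Dom a)) :=
        hF_cont.comp_aestronglyMeasurable (hv_m.const_mul c)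
      have hk_m : AEStronglyMeasurable (fun y => k x y) (volume.restrict (Dom a)) :=
        (k_slice_meas hk_meas x).aestronglyMeasurable
      have hk_nonneg : ∀ y ∈ Dom a, 0 ≤ k x y :=
        fun y hy => (lt_trans hδ (hk_lb x hx y hy)).le
      have hkFcv_int : Integrable (fun y => k x y * F (c * v y)) (volume.restrict (Dom a)) := by
        refine bdd_integrable a _ (Λ * M) (hk_m.mul hFcv_m) fun y hy => ?_
        rw [Real.norm_eq_abs, abs_of_nonneg (mul_nonneg (hk_nonneg y hy) (hF_nonneg _))]
        exact mul_le_mul (hk_ub x hx y hy) (hF_le _) (hF_nonneg _) hΛ.le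
      have hkFv_int : Integrable (fun y => k x y * F (v y)) (volume.restrict (Dom a)) := by
        refine bdd_integrable a _ (Λ * M) (hk_m.mul hFv_m) fun y hy => ?_
        rw [Real.norm_eq_abs, abs_of_nonneg (mul_nonneg (hk_nonneg y hy) (hF_nonneg _))]
        exact mul_le_mul (hk_ub x hx y hy) (hF_le _) (hF_nonneg _) hΛ.le
      have hkFu_int : Integrable (fun y => k x y * F (u y)) (volume.restrict (Dom a)) := by
        refine bdd_integrable a _ (Λ * M)
          (hk_m.mul (hF_cont.comp_aestronglyMeasurable hu_m)) fun y hy => ?_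
        rw [Real.norm_eq_abs, abs_of_nonneg (mul_nonneg (hk_nonneg y hy) (hF_nonneg _))]
        exact mul_le_mul (hk_ub x hx y hy) (hF_le _) (hF_nonneg _) hΛ.le
      have hkg_int : Integrable (fun y => k x y * g y) (volume.restrict (Dom a)) := by
        refine bdd_integrable a _ (Λ * (2 * M)) (hk_m.mul hg_m) fun y hy => ?_
        rw [Real.norm_eq_abs, abs_mul, abs_of_nonneg (hk_nonneg y hy)]
        refine mul_le_mul (hk_ub x hx y hy) ?_ (abs_nonneg _) hΛ.le
        rw [hg_def]
        exact hgb y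
      -- step 1 : ∫ k F(cv) ≤ u x
      have step1 : (∫ y in Dom a, k x y * F (c * v y)) ≤ u x := by
        rw [hu_stat x hx]
        refine integral_mono_ae hkFcv_int hkFu_int
          ((ae_restrict_mem (dom_meas a)).mono fun y hy => ?_)
        refine mul_le_mul_of_nonneg_left ?_ (hk_nonneg y hy)
        refine hF_mono.monotoneOn (mul_nonneg hc0 (hv_pos y hy).le)
          (le_trans (mul_nonneg hc0 (hv_pos y hy).le) (hcs y hy)) (hcs y hy)
      -- step 2 : split
      have step2 : (∫ y in Dom a, k x y * F (c * v y))
          = (∫ y in Dom a, k x y * g y) + c * v x := by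
        have hsplit : (fun y => k x y * F (c * v y))
            = fun y => k x y * g y + c * (k x y * F (v y)) := by
          funext y; simp only [hg_def]; ring
        rw [hsplit, integral_add hkg_int (hkFv_int.const_mul c), integral_const_mul,
          hv_stat x hx]
      -- step 3 : δ * J ≤ ∫ k g
      have step3 : δ * J ≤ ∫ y in Dom a, k x y * g y := by
        calc δ * J = ∫ y in Dom a, δ * g y := (integral_const_mul δ _).symm
          _ ≤ ∫ y in Dom a, k x y * g y := by
            refine integral_mono_ae (hg_int.const_mul δ) hkg_int
              ((ae_restrict_mem (dom_meas a)).mono fun y hy => ?_)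
            exact mul_le_mul_of_nonneg_right (hk_lb x hx y hy).le (hg_pos y hy).le
      have hεv : ε * v x ≤ δ * J := by
        calc ε * v x ≤ ε * B := mul_le_mul_of_nonneg_left (hv_hi x hx) hε_pos.le
          _ = δ * J := by rw [hε_def]; field_simp
      calc (c + ε) * v x = c * v x + ε * v x := by ring
        _ ≤ c * v x + δ * J := by linarith
        _ ≤ c * v x + ∫ y in Dom a, k x y * g y := by linarith
        _ = ∫ y in Dom a, k x y * F (c * v y) := by rw [step2]; ring
        _ ≤ u x := step1
    have : c + ε ≤ c := le_csSup hbdd hmem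
    linarith
  intro x hx
  calc v x = 1 * v x := (one_mul _).symm
    _ ≤ c * v x := mul_le_mul_of_nonneg_right hc1 (hv_pos x hx).le
    _ ≤ u x := hcs x hx

/-- Uniqueness of the nonzero stationary state: two nonzero stationary
solutions of `w = T(w)` in `X` coincide on `Ω`. -/
theorem uniqueness_of_nonzero_stationary_state
    (a δ Λ M : ℝ) (ha : 0 < a) (hδ : 0 < δ) (hΛ : 0 < Λ) (hM : 0 < M)
    (k : ℝ → ℝ → ℝ) (hk_meas : Measurable fun p : ℝ × ℝ => k p.1 p.2)
    (hk_lb : ∀ x ∈ Dom a, ∀ y ∈ Dom a, δ < k x y)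
    (hk_ub : ∀ x ∈ Dom a, ∀ y ∈ Dom a, k x y ≤ Λ)
    (F : ℝ → ℝ) (hF_cont : Continuous F)
    (hF_nonneg : ∀ t : ℝ, 0 ≤ F t) (hF_le : ∀ t : ℝ, F t ≤ M)
    (hF_mono : StrictMonoOn F (Set.Ici 0))
    (hF_vanish : ∀ t : ℝ, t ≤ 0 → F t = 0)
    (hF_ratio : ∀ s t : ℝ, 0 < t → t < s → F s / s < F t / t)
    (u v : ℝ → ℝ) (hu_X : MemX a u) (hv_X : MemX a v)
    (hu_ne : ∃ x ∈ Dom a, u x ≠ 0) (hv_ne : ∃ x ∈ Dom a, v x ≠ 0)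
    (hu_stat : ∀ x ∈ Dom a, u x = ∫ y in Dom a, k x y * F (u y))
    (hv_stat : ∀ x ∈ Dom a, v x = ∫ y in Dom a, k x y * F (v y)) :
    ∀ x ∈ Dom a, u x = v x := by
  intro x hx
  have hu_m : AEStronglyMeasurable u (volume.restrict (Dom a)) := hu_X.1.1
  have hv_m : AEStronglyMeasurable v (volume.restrict (Dom a)) := hv_X.1.1
  refine le_antisymm ?_ ?_
  · exact aux_le a δ Λ M ha hδ hΛ hM k hk_meas hk_lb hk_ub F hF_cont hF_nonneg hF_le
      hF_mono hF_ratio v u hv_m hu_m hv_ne hu_ne hv_stat hu_stat x hx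
  · exact aux_le a δ Λ M ha hδ hΛ hM k hk_meas hk_lb hk_ub F hF_cont hF_nonneg hF_le
      hF_mono hF_ratio u v hu_m hv_m hu_ne hv_ne hu_stat hv_stat x hx
end
end

section
/- Invariance of the class of piecewise continuous functions: if u₀ ∈ X and u_{n+1}(x) = ∫_Ω k(x,y) F(u_n(y)) dy for all n ≥ 0 and x ∈ Ω, then u_n ∈ X for every n ∈ ℕ; more precisely, each u_n is continuous on Ω except possibly at the kernel discontinuity points a₁,…,a_m and at the finitely many discontinuity points of u₀. -/
open MeasureTheory Set Filter Topology

noncomputable section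

/-- Invariance of piecewise continuity under the iteration: if
`u₀ ∈ X` is continuous on `Ω` off the finite set `S`, and the kernel `k` is continuous
off the finite set `P` of patch interface points (i.e. on each product of two of the
subintervals into which `P` divides `Ω`), then every iterate `uₙ` belongs to `X`;
more precisely `uₙ` is square integrable and continuous on `Ω` except possibly at the
points of `P` and the discontinuity points `S` of `u₀`. -/
theorem iterates_remain_piecewise_continuous
    (a δ Λ M : ℝ) (ha : 0 < a) (hδ : 0 < δ) (hΛ : 0 < Λ) (hM : 0 < M)
    (k : ℝ → ℝ → ℝ) (hk_meas : Measurable fun p : ℝ × ℝ => k p.1 p.2)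
    (hk_lb : ∀ x ∈ Dom a, ∀ y ∈ Dom a, δ < k x y)
    (hk_ub : ∀ x ∈ Dom a, ∀ y ∈ Dom a, k x y ≤ Λ)
    (P : Finset ℝ) (hP : ↑P ⊆ Dom a)
    (hk_cont : ContinuousOn (fun p : ℝ × ℝ => k p.1 p.2)
      ((Dom a \ ↑P) ×ˢ (Dom a \ ↑P)))
    (F : ℝ → ℝ) (hF_cont : Continuous F)
    (hF_nonneg : ∀ t : ℝ, 0 ≤ F t) (hF_le : ∀ t : ℝ, F t ≤ M)
    (u : ℕ → ℝ → ℝ) (S : Finset ℝ)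
    (hu0_mem : MemLp (u 0) 2 (μDom a))
    (hu0_cont : ContinuousOn (u 0) (Dom a \ ↑S))
    (hrec : ∀ n, ∀ x ∈ Dom a, u (n + 1) x = ∫ y in Dom a, k x y * F (u n y)) :
    ∀ n, MemLp (u n) 2 (μDom a) ∧ ContinuousOn (u n) (Dom a \ (↑P ∪ ↑S)) := by
  have hDomOpen : IsOpen (Dom a) := isOpen_Ioo
  have hOpen : IsOpen (Dom a \ ↑P) := hDomOpen.sdiff P.finite_toSet.isClosed
  haveI : IsFiniteMeasure (μDom a) := by
    refine ⟨?_⟩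
    rw [μDom, Measure.restrict_apply_univ]
    exact measure_Ioo_lt_top
  have hPnull : volume (↑P : Set ℝ) = 0 := P.finite_toSet.countable.measure_zero _
  have hrestr : μDom a = volume.restrict (Dom a \ ↑P) := by
    rw [μDom]
    refine (Measure.restrict_congr_set ?_).symm
    rw [diff_ae_eq_self]
    exact measure_mono_null Set.inter_subset_right hPnull
  have haey : ∀ᵐ y ∂ μDom a, y ∈ Dom a \ ↑P := by
    rw [hrestr]; exact ae_restrict_mem hOpen.measurableSet
  have haex : ∀ᵐ x ∂ μDom a, x ∈ Dom a := by
    rw [μDom]; exact ae_restrict_mem hDomOpen.measurableSet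
  have key : ∀ n, MemLp (u n) 2 (μDom a) →
      MemLp (u (n+1)) 2 (μDom a) ∧ ContinuousOn (u (n+1)) (Dom a \ (↑P ∪ ↑S)) := by
    intro n hn
    set g : ℝ → ℝ := fun x => ∫ y in Dom a, k x y * F (u n y) with hg
    have hFn : AEStronglyMeasurable (fun y => F (u n y)) (μDom a) :=
      hF_cont.comp_aestronglyMeasurable hn.aestronglyMeasurable
    have hmeas : ∀ x : ℝ, AEStronglyMeasurable (fun y => k x y * F (u n y)) (μDom a) := by
      intro x
      exact ((hk_meas.comp (measurable_const.prodMk measurable_id)).aestronglyMeasurable).mul hFn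
    have hbound : ∀ x ∈ Dom a, ∀ᵐ y ∂ μDom a, ‖k x y * F (u n y)‖ ≤ Λ * M := by
      intro x hx
      filter_upwards [haey] with y hy
      rw [norm_mul]
      have h1 : ‖k x y‖ ≤ Λ := by
        rw [Real.norm_eq_abs, abs_le]
        exact ⟨by linarith [hk_lb x hx y hy.1], hk_ub x hx y hy.1⟩
      have h2 : ‖F (u n y)‖ ≤ M := by
        rw [Real.norm_eq_abs, abs_le]
        exact ⟨by linarith [hF_nonneg (u n y)], hF_le _⟩
      exact mul_le_mul h1 h2 (norm_nonneg _) (le_of_lt hΛ)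
    have hgint : ∀ x : ℝ, g x = ∫ y, k x y * F (u n y) ∂(μDom a) := fun x => rfl
    have hgcont : ContinuousOn g (Dom a \ ↑P) := by
      intro x₀ hx₀
      apply ContinuousAt.continuousWithinAt
      rw [continuousAt_congr (Filter.Eventually.of_forall hgint)] at *
      apply continuousAt_of_dominated (bound := fun _ => Λ * M)
      · exact Filter.Eventually.of_forall hmeas
      · filter_upwards [hDomOpen.mem_nhds hx₀.1] with x hx using hbound x hx
      · exact integrable_const _
      · filter_upwards [haey] with y hy
        have hc : ContinuousAt (fun x => k x y) x₀ := by
          have h : ContinuousAt (fun p : ℝ × ℝ => k p.1 p.2) (x₀, y) :=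
            hk_cont.continuousAt ((hOpen.prod hOpen).mem_nhds ⟨hx₀, hy⟩)
          have heq : (fun x : ℝ => k x y) = (fun p : ℝ × ℝ => k p.1 p.2) ∘ (fun x : ℝ => (x, y)) := rfl
          rw [heq]
          exact ContinuousAt.comp (f := fun x : ℝ => (x, y)) h (continuousAt_id.prodMk continuousAt_const)
        exact hc.mul continuousAt_const
    have hgeq : ∀ x ∈ Dom a, u (n+1) x = g x := fun x hx => hrec n x hx
    have hae : u (n+1) =ᵐ[μDom a] g := by
      filter_upwards [haex] with x hx using hgeq x hx
    have hgbd : ∀ x ∈ Dom a, ‖g x‖ ≤ Λ * M * (μDom a Set.univ).toReal := by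
      intro x hx
      rw [hgint]
      exact norm_integral_le_of_norm_le_const (hbound x hx)
    constructor
    · refine MemLp.of_bound ?_ (Λ * M * (μDom a Set.univ).toReal) ?_
      · refine AEStronglyMeasurable.congr ?_ hae.symm
        rw [hrestr]
        exact hgcont.aestronglyMeasurable hOpen.measurableSet
      · filter_upwards [hae, haex] with x h1 h2
        rw [h1]; exact hgbd x h2
    · have hsub : Dom a \ (↑P ∪ ↑S) ⊆ Dom a \ ↑P :=
        diff_subset_diff_right Set.subset_union_left
      refine (hgcont.mono hsub).congr ?_
      intro x hx
      exact hgeq x hx.1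
  intro n
  induction n with
  | zero =>
      exact ⟨hu0_mem, hu0_cont.mono (diff_subset_diff_right Set.subset_union_right)⟩
  | succ n ih => exact key n ih.1
end
end

section
/- Closedness of X under pointwise limits of the iteration: if u₀ ∈ X, u_{n+1}(x) = ∫_Ω k(x,y) F(u_n(y)) dy for all n ≥ 0 and x ∈ Ω, and the sequence (u_n) converges pointwise on Ω to a function w ∈ L²(Ω), then w ∈ X; more precisely, w is continuous on Ω except possibly at the kernel discontinuity points a₁,…,a_m and at the finitely many discontinuity points of u₀. -/
open MeasureTheory Set Filter Topology

noncomputable section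

/-- Closedness of `X` under pointwise limits of the iteration: if
`u₀ ∈ X` is continuous on `Ω` off the finite set `S`, the kernel `k` is continuous off
the finite set `P` of patch interface points, and the iterates `uₙ` converge pointwise
on `Ω` to `w ∈ L²(Ω)`, then `w ∈ X`; more precisely `w` is continuous on `Ω` except
possibly at the points of `P` and the discontinuity points `S` of `u₀`. -/
theorem pointwise_limit_piecewise_continuous
    (a δ Λ M : ℝ) (ha : 0 < a) (hδ : 0 < δ) (hΛ : 0 < Λ) (hM : 0 < M)
    (k : ℝ → ℝ → ℝ) (hk_meas : Measurable fun p : ℝ × ℝ => k p.1 p.2)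
    (hk_lb : ∀ x ∈ Dom a, ∀ y ∈ Dom a, δ < k x y)
    (hk_ub : ∀ x ∈ Dom a, ∀ y ∈ Dom a, k x y ≤ Λ)
    (P : Finset ℝ) (hP : ↑P ⊆ Dom a)
    (hk_cont : ContinuousOn (fun p : ℝ × ℝ => k p.1 p.2)
      ((Dom a \ ↑P) ×ˢ (Dom a \ ↑P)))
    (F : ℝ → ℝ) (hF_cont : Continuous F)
    (hF_nonneg : ∀ t : ℝ, 0 ≤ F t) (hF_le : ∀ t : ℝ, F t ≤ M)
    (u : ℕ → ℝ → ℝ) (S : Finset ℝ)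
    (hu0_mem : MemLp (u 0) 2 (μDom a))
    (hu0_cont : ContinuousOn (u 0) (Dom a \ ↑S))
    (hrec : ∀ n, ∀ x ∈ Dom a, u (n + 1) x = ∫ y in Dom a, k x y * F (u n y))
    (w : ℝ → ℝ) (hw_mem : MemLp w 2 (μDom a))
    (hconv : ∀ x ∈ Dom a, Tendsto (fun n => u n x) atTop (𝓝 (w x))) :
    ContinuousOn w (Dom a \ (↑P ∪ ↑S)) := by
  have hDom_meas : MeasurableSet (Dom a) := measurableSet_Ioo
  haveI : IsFiniteMeasure (μDom a) := by
    constructor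
    rw [μDom, Measure.restrict_apply_univ]
    exact measure_Ioo_lt_top
  haveI : IsFiniteMeasure (volume.restrict (Dom a)) := ‹IsFiniteMeasure (μDom a)›
  have hFmeas : Measurable F := hF_cont.measurable
  have hkx : ∀ x, Measurable fun y => k x y := fun x =>
    hk_meas.comp (measurable_const.prodMk measurable_id)
  have hae_mem : ∀ᵐ y ∂(μDom a), y ∈ Dom a := ae_restrict_mem hDom_meas
  -- the norm bound for the integrand
  have hbound : ∀ (v : ℝ → ℝ), ∀ x ∈ Dom a, ∀ y ∈ Dom a,
      ‖k x y * F (v y)‖ ≤ Λ * M := by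
    intro v x hx y hy
    rw [norm_mul]
    have hk0 : 0 < k x y := hδ.trans (hk_lb x hx y hy)
    have h1 : ‖k x y‖ ≤ Λ := by
      rw [Real.norm_eq_abs, abs_of_pos hk0]; exact hk_ub x hx y hy
    have h2 : ‖F (v y)‖ ≤ M := by
      rw [Real.norm_eq_abs, abs_of_nonneg (hF_nonneg _)]; exact hF_le _
    exact mul_le_mul h1 h2 (norm_nonneg _) hΛ.le
  -- measurability of the iterates
  have humeas : ∀ n, AEStronglyMeasurable (u n) (μDom a) := by
    intro n
    induction n with
    | zero => exact hu0_mem.1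
    | succ n ih =>
      obtain ⟨v, hv, huv⟩ := ih
      have hjoint : Measurable fun p : ℝ × ℝ => k p.1 p.2 * F (v p.2) :=
        hk_meas.mul (hFmeas.comp (hv.measurable.comp measurable_snd))
      have hg : StronglyMeasurable (fun x => ∫ y, k x y * F (v y) ∂(μDom a)) :=
        hjoint.stronglyMeasurable.integral_prod_right'
      refine hg.aestronglyMeasurable.congr ?_
      filter_upwards [ae_restrict_mem hDom_meas] with x hx
      rw [hrec n x hx]
      refine (integral_congr_ae ?_).symm
      filter_upwards [huv] with y hy
      rw [hy]
  -- the limit satisfies the fixed point equation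
  have h_eq : ∀ x ∈ Dom a, w x = ∫ y in Dom a, k x y * F (w y) := by
    intro x hx
    have h1 : Tendsto (fun n => ∫ y in Dom a, k x y * F (u n y)) atTop
        (𝓝 (∫ y in Dom a, k x y * F (w y))) := by
      refine tendsto_integral_of_dominated_convergence (fun _ => Λ * M)
        (fun n => ((hkx x).aestronglyMeasurable).mul
          (hF_cont.comp_aestronglyMeasurable (humeas n)))
        (integrable_const _) (fun n => ?_) ?_
      · filter_upwards [hae_mem] with y hy
        exact hbound (u n) x hx y hy
      · filter_upwards [hae_mem] with y hy
        exact ((hF_cont.tendsto (w y)).comp (hconv y hy)).const_mul (k x y)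
    have h2 : Tendsto (fun n => u (n + 1) x) atTop (𝓝 (w x)) :=
      (hconv x hx).comp (tendsto_add_atTop_nat 1)
    have h2' : Tendsto (fun n => ∫ y in Dom a, k x y * F (u n y)) atTop (𝓝 (w x)) :=
      h2.congr (fun n => hrec n x hx)
    exact tendsto_nhds_unique h2' h1
  -- P is a null set
  have hPzero : (μDom a) ↑P = 0 := by
    have hvol : volume (↑P : Set ℝ) = 0 := (P.finite_toSet).measure_zero _
    rw [μDom, Measure.restrict_apply (P.finite_toSet).measurableSet]
    exact measure_mono_null inter_subset_left hvol
  have hsub : Dom a \ (↑P ∪ ↑S) ⊆ Dom a \ ↑P := fun x hx =>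
    ⟨hx.1, fun h => hx.2 (Or.inl h)⟩
  -- continuity of the integral function
  have hg_cont : ContinuousOn (fun x => ∫ y, k x y * F (w y) ∂(μDom a))
      (Dom a \ (↑P ∪ ↑S)) := by
    refine continuousOn_of_dominated
      (fun x _ => ((hkx x).aestronglyMeasurable).mul
        (hF_cont.comp_aestronglyMeasurable hw_mem.1))
      (fun x hx => ?_) (integrable_const (Λ * M)) ?_
    · filter_upwards [hae_mem] with y hy
      exact hbound w x (hsub hx).1 y hy
    · filter_upwards [hae_mem, measure_eq_zero_iff_ae_notMem.mp hPzero] with y hy hyP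
      have hky : ContinuousOn (fun x => k x y) (Dom a \ (↑P ∪ ↑S)) := by
        refine hk_cont.comp (continuous_id.prodMk continuous_const).continuousOn fun x hx => ?_
        exact ⟨hsub hx, ⟨hy, hyP⟩⟩
      exact hky.mul continuousOn_const
  refine hg_cont.congr fun x hx => ?_
  exact h_eq x ((hsub hx).1)
end
end

section
/- Extinction criterion via the principal eigenvalue, part 1 (uniqueness of the zero state): assume F(0) = 0, and let λ₀ be the spectral radius of the linearized operator T₀ on L²(Ω). If λ₀ ≤ 1, then 0 is the only stationary solution of w = T(w) in X. -/
set_option maxHeartbeats 1000000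
set_option synthInstance.maxHeartbeats 400000

open MeasureTheory Set Filter Topology
open scoped ENNReal NNReal

noncomputable section

lemma ringinv_eq {A : Type*} [Ring A] (a b : A) (h1 : a * b = 1) (h2 : b * a = 1) :
    Ring.inverse a = b :=
  Ring.inverse_unit (⟨a, b, h1, h2⟩ : Aˣ)

/-- Positivity of the resolvent of a cone-preserving operator, for real parameters
larger than `1`, provided all such parameters lie in the resolvent set. -/
lemma pos_resolvent {E : Type*} [NormedAddCommGroup E] [NormedSpace ℝ E] [CompleteSpace E]
    (C : Set E) (hC : IsClosed C)
    (hadd : ∀ x ∈ C, ∀ y ∈ C, x + y ∈ C)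
    (hsmul : ∀ c : ℝ, 0 ≤ c → ∀ x ∈ C, c • x ∈ C)
    (hzero : (0 : E) ∈ C)
    (T : E →L[ℝ] E) (hT : ∀ x ∈ C, T x ∈ C)
    (hunit : ∀ r : ℝ, 1 < r → IsUnit (r • (1 : E →L[ℝ] E) - T))
    (r : ℝ) (hr : 1 < r) :
    ∀ x ∈ C, Ring.inverse (r • (1 : E →L[ℝ] E) - T) x ∈ C := by
  classical
  set Pos : (E →L[ℝ] E) → Prop := fun A => ∀ x ∈ C, A x ∈ C with hPos
  have hPosClosed : IsClosed {A : E →L[ℝ] E | Pos A} := by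
    have : {A : E →L[ℝ] E | Pos A} = ⋂ x ∈ C, (fun A : E →L[ℝ] E => A x) ⁻¹' C := by
      ext A; simp [hPos, Set.mem_iInter]
    rw [this]
    exact isClosed_biInter fun x _ => hC.preimage (ContinuousLinearMap.apply ℝ E x).continuous
  have pos_one : Pos (1 : E →L[ℝ] E) := fun x hx => hx
  have pos_mul : ∀ A B : E →L[ℝ] E, Pos A → Pos B → Pos (A * B) := fun A B hA hB x hx =>
    hA _ (hB x hx)
  have pos_smul : ∀ (c : ℝ) (A : E →L[ℝ] E), 0 ≤ c → Pos A → Pos (c • A) :=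
    fun c A hc hA x hx => hsmul c hc _ (hA x hx)
  have pos_pow : ∀ (A : E →L[ℝ] E) (n : ℕ), Pos A → Pos (A ^ n) := by
    intro A n hA
    induction n with
    | zero => simpa using pos_one
    | succ n ih => rw [pow_succ]; exact pos_mul _ _ ih hA
  have pos_tsum : ∀ f : ℕ → E →L[ℝ] E, Summable f → (∀ n, Pos (f n)) → Pos (∑' n, f n) := by
    intro f hf hfn
    have htend := hf.hasSum.tendsto_sum_nat
    refine hPosClosed.mem_of_tendsto htend (Filter.Eventually.of_forall fun n => ?_)
    show Pos _
    induction n with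
    | zero => exact fun x hx => by simpa using hzero
    | succ n ih =>
        rw [Finset.sum_range_succ]
        exact fun x hx => hadd _ (ih x hx) _ (hfn n x hx)
  have pos_geom : ∀ A : E →L[ℝ] E, ‖A‖ < 1 → Pos A → Pos (∑' n, A ^ n) := fun A hn hA =>
    pos_tsum _ (summable_geometric_of_norm_lt_one hn) (fun n => pos_pow A n hA)
  set R : ℝ → E →L[ℝ] E := fun s => Ring.inverse (s • (1 : E →L[ℝ] E) - T) with hR
  -- base case
  have base : ∀ s : ℝ, ‖T‖ < s → Pos (R s) := by
    intro s hs
    have hs0 : 0 < s := lt_of_le_of_lt (norm_nonneg T) hs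
    have hxn : ‖s⁻¹ • T‖ < 1 := by
      have hns := norm_smul (s⁻¹) T
      rw [hns, norm_inv, Real.norm_of_nonneg hs0.le, ← div_eq_inv_mul, div_lt_one hs0]
      exact hs
    have hfac : s • (1 : E →L[ℝ] E) - T = s • (1 - s⁻¹ • T) := by
      rw [smul_sub, smul_smul, mul_inv_cancel₀ hs0.ne', one_smul]
    have h1 : (s • (1 : E →L[ℝ] E) - T) * (s⁻¹ • ∑' n, (s⁻¹ • T) ^ n) = 1 := by
      rw [hfac, smul_mul_assoc, mul_smul_comm, smul_smul, mul_inv_cancel₀ hs0.ne', one_smul,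
        mul_neg_geom_series _ hxn]
    have h2 : (s⁻¹ • ∑' n, (s⁻¹ • T) ^ n) * (s • (1 : E →L[ℝ] E) - T) = 1 := by
      rw [hfac, smul_mul_assoc, mul_smul_comm, smul_smul, inv_mul_cancel₀ hs0.ne', one_smul,
        geom_series_mul_neg _ hxn]
    have hRs : R s = s⁻¹ • ∑' n, (s⁻¹ • T) ^ n := ringinv_eq _ _ h1 h2
    rw [hRs]
    exact pos_smul _ _ (inv_nonneg.mpr hs0.le)
      (pos_geom _ hxn (pos_smul _ _ (inv_nonneg.mpr hs0.le) hT))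
  -- step-down
  have step : ∀ t s : ℝ, 1 < s → s ≤ t → (t - s) * ‖R t‖ < 1 → Pos (R t) → Pos (R s) := by
    intro t s hs1 hst hsmall hPt
    have ht1 : 1 < t := lt_of_lt_of_le hs1 hst
    have hut : IsUnit (t • (1 : E →L[ℝ] E) - T) := hunit t ht1
    have hxn : ‖(t - s) • R t‖ < 1 := by
      have hns := norm_smul (t - s) (R t)
      rw [hns, Real.norm_of_nonneg (by linarith)]
      exact hsmall
    have hDR : (t • (1 : E →L[ℝ] E) - T) * R t = 1 := Ring.mul_inverse_cancel _ hut
    have hRD : R t * (t • (1 : E →L[ℝ] E) - T) = 1 := Ring.inverse_mul_cancel _ hut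
    have hfac : s • (1 : E →L[ℝ] E) - T
        = (t • (1 : E →L[ℝ] E) - T) * (1 - (t - s) • R t) := by
      rw [mul_sub, mul_one, mul_smul_comm, hDR, sub_smul]
      abel
    have h1 : (s • (1 : E →L[ℝ] E) - T) * ((∑' n, ((t - s) • R t) ^ n) * R t) = 1 := by
      rw [hfac, mul_assoc, ← mul_assoc (1 - (t - s) • R t), mul_neg_geom_series _ hxn,
        one_mul, hDR]
    have h2 : ((∑' n, ((t - s) • R t) ^ n) * R t) * (s • (1 : E →L[ℝ] E) - T) = 1 := by
      rw [hfac, mul_assoc, ← mul_assoc (R t), hRD, one_mul, geom_series_mul_neg _ hxn]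
    have hRs : R s = (∑' n, ((t - s) • R t) ^ n) * R t := ringinv_eq _ _ h1 h2
    rw [hRs]
    exact pos_mul _ _ (pos_geom _ hxn (pos_smul _ _ (by linarith) hPt)) hPt
  -- connectedness argument
  set N : ℝ := max r (‖T‖ + 1) with hN
  have hrN : r ≤ N := le_max_left _ _
  have hTN : ‖T‖ < N := lt_of_lt_of_le (lt_add_one _) (le_max_right _ _)
  set S : Set ℝ := {t | r ≤ t ∧ t ≤ N ∧ ∀ s, t ≤ s → s ≤ N → Pos (R s)} with hS
  have hNS : N ∈ S := ⟨hrN, le_refl _, fun s hs hs' => by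
    have : s = N := le_antisymm hs' hs
    exact this ▸ base N hTN⟩
  have hSne : S.Nonempty := ⟨N, hNS⟩
  have hSbdd : BddBelow S := ⟨r, fun t ht => ht.1⟩
  set t₁ : ℝ := sInf S with ht₁
  have hrt₁ : r ≤ t₁ := le_csInf hSne fun t ht => ht.1
  have ht₁N : t₁ ≤ N := csInf_le hSbdd hNS
  have ht₁1 : 1 < t₁ := lt_of_lt_of_le hr hrt₁
  have habove : ∀ s, t₁ < s → s ≤ N → Pos (R s) := by
    intro s hs hsN
    obtain ⟨t, htS, hts⟩ := exists_lt_of_csInf_lt hSne hs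
    exact htS.2.2 s hts.le hsN
  have ht₁pos : Pos (R t₁) := by
    rcases eq_or_lt_of_le ht₁N with heq | hlt
    · rw [heq]; exact base N hTN
    · have hcont : ContinuousAt R t₁ := by
        obtain ⟨u, hu⟩ := hunit t₁ ht₁1
        have h2 : ContinuousAt Ring.inverse (t₁ • (1 : E →L[ℝ] E) - T) := by
          rw [← hu]; exact NormedRing.inverse_continuousAt u
        have h1 : Continuous fun s : ℝ => s • (1 : E →L[ℝ] E) - T :=
          (continuous_id.smul continuous_const).sub continuous_const
        exact ContinuousAt.comp (x := t₁) h2 h1.continuousAt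
      have htend : Tendsto R (𝓝[>] t₁) (𝓝 (R t₁)) := hcont.continuousWithinAt
      refine hPosClosed.mem_of_tendsto htend ?_
      filter_upwards [Ioc_mem_nhdsGT_of_mem ⟨le_refl t₁, hlt⟩] with s hs
      exact habove s hs.1 hs.2
  have ht₁S : t₁ ∈ S := by
    refine ⟨hrt₁, ht₁N, fun s hts hsN => ?_⟩
    rcases eq_or_lt_of_le hts with heq | hlt
    · rwa [← heq]
    · exact habove s hlt hsN
  have ht₁r : t₁ ≤ r := by
    by_contra hcon
    push_neg at hcon
    set ε : ℝ := min ((t₁ - r) / 2) (1 / (2 * (‖R t₁‖ + 1))) with hε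
    have hnorm1 : 0 < ‖R t₁‖ + 1 := by positivity
    have hε0 : 0 < ε := lt_min (by linarith) (by positivity)
    have hε1 : ε ≤ (t₁ - r) / 2 := min_le_left _ _
    have hε2 : ε ≤ 1 / (2 * (‖R t₁‖ + 1)) := min_le_right _ _
    have hmem : t₁ - ε ∈ S := by
      refine ⟨by linarith, by linarith, fun s hts hsN => ?_⟩
      rcases le_or_gt t₁ s with h | h
      · exact ht₁S.2.2 s h hsN
      · refine step t₁ s (by linarith) h.le ?_ ht₁pos
        have h1 : t₁ - s ≤ ε := by linarith
        have hup : (t₁ - s) * ‖R t₁‖ ≤ ε * (‖R t₁‖ + 1) := by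
          apply mul_le_mul h1 (by linarith) (norm_nonneg _) (by linarith [hε0])
        have h2 : ε * (‖R t₁‖ + 1) ≤ 1 / 2 := by
          calc ε * (‖R t₁‖ + 1) ≤ (1 / (2 * (‖R t₁‖ + 1))) * (‖R t₁‖ + 1) :=
                mul_le_mul_of_nonneg_right hε2 hnorm1.le
            _ = 1 / 2 := by field_simp
        linarith
    have := csInf_le hSbdd hmem
    linarith
  have ht₁eq : t₁ = r := le_antisymm ht₁r hrt₁
  exact ht₁S.2.2 r ht₁eq.le hrN

/-- Under the standing hypotheses, `F t / t` is bounded by the derivative at zero. -/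
lemma ratio_le_deriv (F : ℝ → ℝ) (r₀ : ℝ) (hF_vanish : ∀ t : ℝ, t ≤ 0 → F t = 0)
    (hF_deriv : HasDerivAt F r₀ 0)
    (hF_ratio : ∀ s t : ℝ, 0 < t → t < s → F s / s < F t / t) :
    ∀ t : ℝ, 0 < t → F t / t ≤ r₀ := by
  intro t ht
  have hslope : Tendsto (slope F 0) (𝓝[>] 0) (𝓝 r₀) :=
    (hasDerivAt_iff_tendsto_slope.mp hF_deriv).mono_left
      (nhdsWithin_mono 0 fun y hy => ne_of_gt hy)
  refine ge_of_tendsto hslope ?_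
  filter_upwards [Ioo_mem_nhdsGT_of_mem ⟨le_refl (0:ℝ), ht⟩] with s hs
  have h := hF_ratio t s hs.1 hs.2
  rw [slope_def_field, hF_vanish 0 le_rfl, sub_zero, sub_zero]
  exact h.le

/-- Extinction criterion, part 1: if `F(0) = 0` and the spectral
radius `λ₀` of the linearization `T₀` on `L²(Ω)` satisfies `λ₀ ≤ 1`, then `0` is the
only stationary solution of `w = T(w)` in `X`. -/
theorem zero_only_stationary_solution_of_spectralRadius_le_one
    (a δ Λ M r₀ : ℝ) (ha : 0 < a) (hδ : 0 < δ) (hΛ : 0 < Λ) (hM : 0 < M)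
    (k : ℝ → ℝ → ℝ) (hk_meas : Measurable fun p : ℝ × ℝ => k p.1 p.2)
    (hk_lb : ∀ x ∈ Dom a, ∀ y ∈ Dom a, δ < k x y)
    (hk_ub : ∀ x ∈ Dom a, ∀ y ∈ Dom a, k x y ≤ Λ)
    (P : Finset ℝ) (hP : ↑P ⊆ Dom a)
    (hk_cont : ContinuousOn (fun p : ℝ × ℝ => k p.1 p.2)
      ((Dom a \ ↑P) ×ˢ (Dom a \ ↑P)))
    (F : ℝ → ℝ) (hF_cont : Continuous F)
    (hF_nonneg : ∀ t : ℝ, 0 ≤ F t) (hF_le : ∀ t : ℝ, F t ≤ M)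
    (hF_mono : StrictMonoOn F (Set.Ici 0))
    (hF_vanish : ∀ t : ℝ, t ≤ 0 → F t = 0)
    (hF_deriv : HasDerivAt F r₀ 0) (hr₀ : 1 < r₀)
    (hF_ratio : ∀ s t : ℝ, 0 < t → t < s → F s / s < F t / t)
    (T₀ : Lp ℝ 2 (μDom a) →L[ℝ] Lp ℝ 2 (μDom a))
    (hT₀ : ∀ u : Lp ℝ 2 (μDom a),
      ∀ᵐ x ∂(μDom a), T₀ u x = r₀ * ∫ y in Dom a, k x y * u y)
    (hrad : spectralRadius ℝ T₀ ≤ 1) :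
    ∀ w : ℝ → ℝ, MemX a w →
      (∀ x ∈ Dom a, w x = ∫ y in Dom a, k x y * F (w y)) →
      ∀ x ∈ Dom a, w x = 0 := by
  intro w hw hsol
  obtain ⟨hwm, -⟩ := hw
  haveI hfin : IsFiniteMeasure (volume.restrict (Dom a)) := by
    constructor
    rw [Measure.restrict_apply_univ, Dom, Real.volume_Ioo]
    exact ENNReal.ofReal_lt_top
  haveI : IsFiniteMeasure (μDom a) := hfin
  have hwmeas := hwm.aestronglyMeasurable
  have hFw_meas : AEStronglyMeasurable (fun y => F (w y)) (μDom a) :=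
    hF_cont.comp_aestronglyMeasurable hwmeas
  have hFw_int : Integrable (fun y => F (w y)) (μDom a) := by
    refine (integrable_const M).mono' hFw_meas ?_
    refine Filter.Eventually.of_forall fun y => ?_
    rw [Real.norm_of_nonneg (hF_nonneg _)]
    exact hF_le _
  set I : ℝ := ∫ y, F (w y) ∂(μDom a) with hI
  have hI0 : 0 ≤ I := integral_nonneg fun y => hF_nonneg _
  have hkx_meas : ∀ x : ℝ, Measurable fun y => k x y := fun x =>
    hk_meas.comp measurable_prodMk_left
  have hae_mem : ∀ᵐ y ∂(μDom a), y ∈ Dom a := ae_restrict_mem measurableSet_Ioo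
  have hkFw_int : ∀ x ∈ Dom a, Integrable (fun y => k x y * F (w y)) (μDom a) := by
    intro x hx
    refine (integrable_const (Λ * M)).mono'
      ((hkx_meas x).aestronglyMeasurable.mul hFw_meas) ?_
    filter_upwards [hae_mem] with y hy
    have h1 : 0 < k x y := lt_trans hδ (hk_lb x hx y hy)
    rw [Real.norm_of_nonneg (mul_nonneg h1.le (hF_nonneg _))]
    exact mul_le_mul (hk_ub x hx y hy) (hF_le _) (hF_nonneg _) hΛ.le
  rcases eq_or_lt_of_le hI0 with hIzero | hIpos
  · -- the trivial case: the total growth integral vanishes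
    intro x hx
    rw [hsol x hx]
    have hFz : (fun y => F (w y)) =ᵐ[μDom a] 0 :=
      (integral_eq_zero_iff_of_nonneg (fun y => hF_nonneg _) hFw_int).mp hIzero.symm
    have hz : (fun y => k x y * F (w y)) =ᵐ[μDom a] 0 := by
      filter_upwards [hFz] with y hy
      simp only [Pi.zero_apply] at hy ⊢
      rw [hy, mul_zero]
    calc ∫ y in Dom a, k x y * F (w y) = ∫ y, (0:ℝ) ∂(μDom a) := integral_congr_ae hz
      _ = 0 := integral_zero _ _
  · -- the main case: derive a contradiction with the spectral radius bound
    exfalso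
    set c : ℝ := δ * I with hc
    have hcpos : 0 < c := mul_pos hδ hIpos
    have hlow : ∀ x ∈ Dom a, c ≤ w x := by
      intro x hx
      rw [hsol x hx]
      have heq : δ * I = ∫ y, δ * F (w y) ∂(μDom a) := (integral_const_mul δ _).symm
      rw [hc, heq]
      refine integral_mono_ae (hFw_int.const_mul δ) (hkFw_int x hx) ?_
      filter_upwards [hae_mem] with y hy
      exact mul_le_mul_of_nonneg_right (hk_lb x hx y hy).le (hF_nonneg _)
    set C : ℝ := ((μDom a) Set.univ).toReal * (Λ * M) with hCdef
    have hup : ∀ x ∈ Dom a, w x ≤ C := by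
      intro x hx
      rw [hsol x hx]
      have h2 : ∫ _y, (Λ * M) ∂(μDom a) = C := by rw [integral_const, smul_eq_mul]; rfl
      rw [← h2]
      refine integral_mono_ae (hkFw_int x hx) (integrable_const _) ?_
      filter_upwards [hae_mem] with y hy
      exact mul_le_mul (hk_ub x hx y hy) (hF_le _) (hF_nonneg _) hΛ.le
    have hF0 : F 0 = 0 := hF_vanish 0 le_rfl
    have hFc_pos : 0 < F c := by
      have := hF_mono Set.self_mem_Ici (Set.mem_Ici.mpr hcpos.le) hcpos
      rwa [hF0] at this
    set θ : ℝ := F c / c with hθ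
    have hθpos : 0 < θ := div_pos hFc_pos hcpos
    have hθr : θ < r₀ :=
      lt_of_lt_of_le (hF_ratio c (c/2) (by linarith) (by linarith))
        (ratio_le_deriv F r₀ hF_vanish hF_deriv hF_ratio (c/2) (by linarith))
    have hFw_le : ∀ y ∈ Dom a, F (w y) ≤ θ * w y := by
      intro y hy
      have hwy : c ≤ w y := hlow y hy
      have hwy0 : 0 < w y := lt_of_lt_of_le hcpos hwy
      rcases eq_or_lt_of_le hwy with heq | hlt
      · rw [← heq, hθ, div_mul_cancel₀ _ hcpos.ne']
      · have hr := hF_ratio (w y) c hcpos hlt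
        rw [div_lt_div_iff₀ hwy0 hcpos] at hr
        rw [hθ, div_mul_eq_mul_div, le_div_iff₀ hcpos]
        linarith
    set q : ℝ := r₀ / θ with hq
    have hq1 : 1 < q := (one_lt_div hθpos).mpr hθr
    set ρ : ℝ := (1 + q) / 2 with hρ
    have hρ1 : 1 < ρ := by rw [hρ]; linarith
    have hρq : ρ < q := by rw [hρ]; linarith
    have hw_int : ∀ x ∈ Dom a, Integrable (fun y => k x y * w y) (μDom a) := by
      intro x hx
      refine (integrable_const (Λ * C)).mono'
        ((hkx_meas x).aestronglyMeasurable.mul hwmeas) ?_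
      filter_upwards [hae_mem] with y hy
      have hk0 : 0 < k x y := lt_trans hδ (hk_lb x hx y hy)
      have hw0 : 0 < w y := lt_of_lt_of_le hcpos (hlow y hy)
      rw [Real.norm_of_nonneg (mul_nonneg hk0.le hw0.le)]
      exact mul_le_mul (hk_ub x hx y hy) (hup y hy) hw0.le hΛ.le
    have hkey : ∀ x ∈ Dom a, q * w x ≤ r₀ * ∫ y in Dom a, k x y * w y := by
      intro x hx
      have hmono : ∫ y in Dom a, (k x y * F (w y)) * θ⁻¹ ≤ ∫ y in Dom a, k x y * w y := by
        refine integral_mono_ae ((hkFw_int x hx).mul_const _) (hw_int x hx) ?_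
        filter_upwards [hae_mem] with y hy
        have hk0 : (0:ℝ) ≤ k x y := (lt_trans hδ (hk_lb x hx y hy)).le
        rw [mul_assoc]
        refine mul_le_mul_of_nonneg_left ?_ hk0
        rw [← div_eq_mul_inv, div_le_iff₀ hθpos]
        calc F (w y) ≤ θ * w y := hFw_le y hy
          _ = w y * θ := mul_comm _ _
      have hval : ∫ y in Dom a, (k x y * F (w y)) * θ⁻¹ = w x * θ⁻¹ := by
        rw [integral_mul_const]
        exact congrArg (· * θ⁻¹) (hsol x hx).symm
      rw [hval] at hmono
      have hqw : q * w x = r₀ * (w x * θ⁻¹) := by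
        rw [hq, div_eq_mul_inv]; ring
      rw [hqw]
      exact mul_le_mul_of_nonneg_left hmono (by linarith)
    -- pass to the L² space
    set W : Lp ℝ 2 (μDom a) := hwm.toLp w with hWdef
    have hW : ⇑W =ᵐ[μDom a] w := hwm.coeFn_toLp
    have hWc : ∀ᵐ y ∂(μDom a), c ≤ W y := by
      filter_upwards [hW, hae_mem] with y h1 h2
      rw [h1]; exact hlow y h2
    have hsame : ∀ x : ℝ, ∫ y in Dom a, k x y * W y = ∫ y in Dom a, k x y * w y := by
      intro x
      apply integral_congr_ae
      filter_upwards [hW] with y hy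
      rw [hy]
    -- the positive cone of L²
    have hClosed : IsClosed (Set.Ici (0 : Lp ℝ 2 (μDom a))) := isClosed_Ici
    have haddC : ∀ x ∈ Set.Ici (0 : Lp ℝ 2 (μDom a)), ∀ y ∈ Set.Ici (0 : Lp ℝ 2 (μDom a)),
        x + y ∈ Set.Ici (0 : Lp ℝ 2 (μDom a)) := fun x hx y hy => Set.mem_Ici.mpr (add_nonneg hx hy)
    have hsmulC : ∀ cc : ℝ, 0 ≤ cc → ∀ f ∈ Set.Ici (0 : Lp ℝ 2 (μDom a)),
        cc • f ∈ Set.Ici (0 : Lp ℝ 2 (μDom a)) := by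
      intro cc hcc f hf
      rw [Set.mem_Ici, ← Lp.coeFn_nonneg]
      filter_upwards [Lp.coeFn_smul cc f, (Lp.coeFn_nonneg f).mpr hf] with y h1 h2
      simp only [Pi.zero_apply] at h2 ⊢
      rw [h1, Pi.smul_apply, smul_eq_mul]
      exact mul_nonneg hcc h2
    have hTpos : ∀ f ∈ Set.Ici (0 : Lp ℝ 2 (μDom a)),
        T₀ f ∈ Set.Ici (0 : Lp ℝ 2 (μDom a)) := by
      intro f hf
      have hf_ae : 0 ≤ᵐ[μDom a] ⇑f := (Lp.coeFn_nonneg f).mpr hf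
      rw [Set.mem_Ici, ← Lp.coeFn_nonneg]
      filter_upwards [hT₀ f, hae_mem] with x hx hxmem
      simp only [Pi.zero_apply]
      rw [hx]
      refine mul_nonneg (by linarith) (integral_nonneg_of_ae ?_)
      filter_upwards [hf_ae, hae_mem] with y h1 h2
      simp only [Pi.zero_apply] at h1
      exact mul_nonneg (lt_trans hδ (hk_lb x hxmem y h2)).le h1
    -- all real parameters > 1 are in the resolvent set
    have hunit : ∀ s : ℝ, 1 < s →
        IsUnit (s • (1 : Lp ℝ 2 (μDom a) →L[ℝ] Lp ℝ 2 (μDom a)) - T₀) := by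
      intro s hs
      have hn1 : (1:ℝ) < ‖s‖ := by
        rw [Real.norm_eq_abs]; exact lt_of_lt_of_le hs (le_abs_self s)
      have hn : (1:ℝ≥0∞) < (‖s‖₊ : ℝ≥0∞) := by exact_mod_cast hn1
      have hmem := spectrum.mem_resolventSet_of_spectralRadius_lt
        (a := T₀) (k := s) (lt_of_le_of_lt hrad hn)
      rw [spectrum.mem_resolventSet_iff] at hmem
      rw [← Algebra.algebraMap_eq_smul_one]
      exact hmem
    -- subinvariance: T₀ W - ρ • W is in the cone
    set u : Lp ℝ 2 (μDom a) := T₀ W - ρ • W with hu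
    have hu0 : u ∈ Set.Ici (0 : Lp ℝ 2 (μDom a)) := by
      rw [Set.mem_Ici, ← Lp.coeFn_nonneg]
      have hcoe : ⇑u =ᵐ[μDom a] ⇑(T₀ W) - ⇑(ρ • W) := Lp.coeFn_sub (T₀ W) (ρ • W)
      filter_upwards [hcoe, Lp.coeFn_smul ρ W, hT₀ W, hW, hae_mem] with x h1 h2 h3 h4 h5
      simp only [Pi.zero_apply]
      rw [h1, Pi.sub_apply, h2, Pi.smul_apply, smul_eq_mul, h3, hsame x, h4]
      have hk := hkey x h5
      have hwx : c ≤ w x := hlow x h5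
      have h6 : 0 ≤ (q - ρ) * w x := mul_nonneg (by linarith) (by linarith)
      nlinarith
    -- apply resolvent positivity
    have hres := pos_resolvent (Set.Ici (0 : Lp ℝ 2 (μDom a))) hClosed haddC hsmulC
      Set.self_mem_Ici T₀ hTpos hunit ρ hρ1 u hu0
    -- identify the image of u under the resolvent
    have hunitρ := hunit ρ hρ1
    have hRA : Ring.inverse (ρ • (1 : Lp ℝ 2 (μDom a) →L[ℝ] Lp ℝ 2 (μDom a)) - T₀) *
        (ρ • (1 : Lp ℝ 2 (μDom a) →L[ℝ] Lp ℝ 2 (μDom a)) - T₀) = 1 :=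
      Ring.inverse_mul_cancel _ hunitρ
    have hAW : (ρ • (1 : Lp ℝ 2 (μDom a) →L[ℝ] Lp ℝ 2 (μDom a)) - T₀) W = -u := by
      rw [hu]
      rw [ContinuousLinearMap.sub_apply, ContinuousLinearMap.smul_apply,
        ContinuousLinearMap.one_apply]
      abel
    have hRu : Ring.inverse (ρ • (1 : Lp ℝ 2 (μDom a) →L[ℝ] Lp ℝ 2 (μDom a)) - T₀) u = -W := by
      have h1 : Ring.inverse (ρ • (1 : Lp ℝ 2 (μDom a) →L[ℝ] Lp ℝ 2 (μDom a)) - T₀)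
          ((ρ • (1 : Lp ℝ 2 (μDom a) →L[ℝ] Lp ℝ 2 (μDom a)) - T₀) W) = W := by
        rw [← ContinuousLinearMap.mul_apply, hRA, ContinuousLinearMap.one_apply]
      rw [hAW, map_neg, neg_eq_iff_eq_neg] at h1
      exact h1
    have hWneg : (0 : Lp ℝ 2 (μDom a)) ≤ -W := by
      rw [← hRu]; exact hres
    -- contradiction with W ≥ c > 0 a.e. on a set of positive measure
    have hae : ∀ᵐ x ∂(μDom a), False := by
      filter_upwards [(Lp.coeFn_nonneg (-W)).mpr hWneg, Lp.coeFn_neg W, hWc] with x h1 h2 h3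
      rw [h2] at h1
      simp only [Pi.zero_apply, Pi.neg_apply] at h1
      linarith
    have hμ : μDom a Set.univ = 0 := by
      have := ae_iff.mp hae
      simpa using this
    rw [μDom, Measure.restrict_apply_univ, Dom, Real.volume_Ioo, ENNReal.ofReal_eq_zero] at hμ
    linarith
end
end
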